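/- Let Y = Y(X) ∈ X·ℤ_p[[X]] be the unique power series with zero constant term satisfying E(Y) = E(X)^p. Then Y ∈ X^p ℤ_p[[X]] + p X ℤ_p[[X]]; equivalently, every coefficient of X^j in Y with 1 ≤ j < p is divisible by p. -/

import Mathlib

open PowerSeries
open scoped Classical

noncomputable section

/-- The power series `Σ_{i≥0} X^(p^i − 1)`, the logarithmic derivative of the
Artin–Hasse exponential. -/
def ahLogDeriv (p : ℕ) (R : Type*) [CommRing R] : PowerSeries R :=
  PowerSeries.mk fun n => if ∃ i : ℕ, n + 1 = p ^ i then 1 else 0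

/-- `E` is the Artin–Hasse exponential `exp(Σ_{i≥0} X^(p^i)/p^i)`: over a characteristic-zero
ring with no additive torsion this is equivalent to `E(0) = 1` together with the logarithmic
differential equation `E' = E · Σ_{i≥0} X^(p^i−1)`. -/
def IsArtinHasse (p : ℕ) {R : Type*} [CommRing R] (E : PowerSeries R) : Prop :=
  PowerSeries.constantCoeff (R := R) E = 1 ∧
    (PowerSeries.derivative R) E = E * ahLogDeriv p R

/-- Composition `f(g)` of formal power series (intended for `g` with zero constant term,
in which case this is the usual substitution). -/
def psComp {R : Type*} [CommRing R] (f g : PowerSeries R) : PowerSeries R :=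
  PowerSeries.mk fun n => ∑ k ∈ Finset.range (n + 1),
    PowerSeries.coeff (R := R) k f * PowerSeries.coeff (R := R) n (g ^ k)

/-- `w = π_i`: the unique power series with zero constant term satisfying
`E(π_i) = (1+T)^(p^i)`. -/
def IsPiAH (p : ℕ) {R : Type*} [CommRing R] (E : PowerSeries R) (i : ℕ)
    (w : PowerSeries R) : Prop :=
  PowerSeries.constantCoeff (R := R) w = 0 ∧ psComp E w = (1 + PowerSeries.X) ^ p ^ i

/-- `bin z n` is the binomial coefficient `C(z, n)`, characterized by
`n! · bin z n = z(z−1)⋯(z−n+1)`. -/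
def IsBinomial {R : Type*} [CommRing R] (bin : R → ℕ → R) : Prop :=
  ∀ z n, (n.factorial : R) * bin z n = ∏ i ∈ Finset.range n, (z - (i : R))

/-- The binomial series `(1+T)^z = Σ_n C(z,n) Tⁿ`. -/
def onePlusTPow {R : Type*} [CommRing R] (bin : R → ℕ → R) (z : R) : PowerSeries R :=
  PowerSeries.mk fun n => bin z n

/-- `F^z = Σ_n C(z,n) (F−1)ⁿ` for a power series `F` with constant term `1`. -/
def psPow {R : Type*} [CommRing R] (bin : R → ℕ → R) (z : R) (F : PowerSeries R) :
    PowerSeries R :=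
  PowerSeries.mk fun n => ∑ k ∈ Finset.range (n + 1),
    bin z k * PowerSeries.coeff (R := R) n ((F - 1) ^ k)

/-- The canonical ring map `ℤ_p = W(𝔽_p) → W(F)` for a ring `F` of characteristic `p`. -/
def toWitt (p : ℕ) [Fact p.Prime] (F : Type*) [CommRing F] [CharP F p] :
    ℤ_[p] →+* WittVector p F :=
  (WittVector.map (ZMod.castHom dvd_rfl F)).comp (WittVector.equiv p).symm.toRingHom

/-- `E(cst · η · x^u)` as a power series in `x` whose coefficients are power series
(in the variable of `η`). -/
def EmonoSub {R : Type*} [CommRing R] (E : PowerSeries R) (eta : PowerSeries R) (cst : R)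
    (u : ℕ) : PowerSeries (PowerSeries R) :=
  if u = 0 then PowerSeries.C (R := _) (psComp E (PowerSeries.C (R := R) cst * eta))
  else PowerSeries.mk fun v =>
    if u ∣ v then PowerSeries.C (R := R) (PowerSeries.coeff (R := R) (v / u) E * cst ^ (v / u)) * eta ^ (v / u)
    else 0

/-- `E_h(x, η) = ∏_{u=0}^{d'} E(η ĥ_u x^u)` for `h` with (lifted) coefficients `co u`. -/
def Eh {R : Type*} [CommRing R] (E : PowerSeries R) (eta : PowerSeries R) (co : ℕ → R)
    (d' : ℕ) : PowerSeries (PowerSeries R) :=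
  ∏ u ∈ Finset.range (d' + 1), EmonoSub E eta (co u) u

/-- The partial product `∏_{i<n} E_{f_i}(x, π_i)`. -/
def EfPartial {R : Type*} [CommRing R] (E : PowerSeries R) (Pi : ℕ → PowerSeries R)
    (co : ℕ → ℕ → R) (d : ℕ → ℕ) (n : ℕ) : PowerSeries (PowerSeries R) :=
  ∏ i ∈ Finset.range n, Eh E (Pi i) (co i) (d i)

/-- `Ef = E_f(x) = ∏_{i=0}^∞ E_{f_i}(x, π_i)`, as the `(p,T)`-adic limit of the partial
products: the `x^u`-coefficient of `E_f − ∏_{i<n} E_{f_i}` lies in `(p, T)^(n+1)`. -/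
def IsEfProd (p : ℕ) {R : Type*} [CommRing R] (E : PowerSeries R) (Pi : ℕ → PowerSeries R)
    (co : ℕ → ℕ → R) (d : ℕ → ℕ) (Ef : PowerSeries (PowerSeries R)) : Prop :=
  ∀ n u : ℕ,
    PowerSeries.coeff (R := _) u Ef - PowerSeries.coeff (R := _) u (EfPartial E Pi co d n)
      ∈ (Ideal.span {(p : PowerSeries R), PowerSeries.X}) ^ (n + 1)

/-- `ord_R(g) ≥ r`:  for `mt = 1` the `T`-adic order of `g` is at least `r`; for `mt ≥ 2`,
writing `g = Σ_j c_j T^j`, `min_j (ord_p(c_j)·p^(mt−2)(p−1) + j) ≥ r`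
(the `(p^θ, T)`-adic order with `θ = 1/(p^(mt−2)(p−1))`, normalized by `ord_R(T) = 1`). -/
def ordRge (p : ℕ) {R : Type*} [CommRing R] (mt : ℕ) (g : PowerSeries R) (r : ℚ) : Prop :=
  ∀ j n : ℕ, ¬ ((p : R) ^ (n + 1) ∣ PowerSeries.coeff (R := R) j g) →
    (if mt = 1 then r ≤ (j : ℚ)
     else r ≤ (n : ℚ) * ((p : ℚ) ^ (mt - 2) * ((p : ℚ) - 1)) + (j : ℚ))

/-! Modulo `p`, `E^p = (1 + X·G)^p ≡ 1 + X^p·G^p`, so `E(Y) ≡ 1 (mod p, X^p)`. Since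
`E = 1 + X + O(X²)` and `Y` has no constant term, `E(Y) = 1 + Y + (terms in Y²)`, and comparing
coefficients of `X^j` for `j = 1, …, p-1` in turn shows `p ∣ Y_j`. -/

section

variable {R : Type*} [CommRing R]

lemma constantCoeff_ahLogDeriv (p : ℕ) : constantCoeff (ahLogDeriv p R) = 1 := by
  rw [← coeff_zero_eq_constantCoeff_apply, ahLogDeriv, coeff_mk, if_pos ⟨0, (pow_zero p).symm⟩]

lemma IsArtinHasse.coeff_one {p : ℕ} {E : R⟦X⟧} (hE : IsArtinHasse p E) : coeff 1 E = 1 := by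
  have h := congrArg (coeff 0) hE.2
  rw [coeff_derivative, coeff_zero_eq_constantCoeff_apply, map_mul, hE.1,
    constantCoeff_ahLogDeriv, mul_one] at h
  simpa using h

lemma coeff_psComp_of_ne_zero (f g : R⟦X⟧) {j : ℕ} (hj : j ≠ 0) :
    coeff j (psComp f g) =
      coeff 1 f * coeff j g + ∑ k ∈ Finset.Ico 2 (j + 1), coeff k f * coeff j (g ^ k) := by
  rw [psComp, coeff_mk, Finset.range_eq_Ico, Finset.sum_eq_sum_Ico_succ_bot (by omega),
    Finset.sum_eq_sum_Ico_succ_bot (by omega), pow_zero, pow_one, coeff_one, if_neg hj,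
    mul_zero, zero_add]

lemma dvd_coeff_pow_of_dvd_coeff_lt {a : R} {g : R⟦X⟧} (hg : constantCoeff g = 0) {j : ℕ}
    (h : ∀ i < j, a ∣ coeff i g) {k : ℕ} (hk : 2 ≤ k) : a ∣ coeff j (g ^ k) := by
  obtain ⟨k, rfl⟩ : ∃ k', k = k' + 1 := ⟨k - 1, by omega⟩
  rw [pow_succ', coeff_mul]
  refine Finset.dvd_sum fun ⟨m, n⟩ hmn => ?_
  rw [Finset.HasAntidiagonal.mem_antidiagonal] at hmn
  rcases Nat.eq_zero_or_pos n with rfl | hn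
  · rw [coeff_zero_eq_constantCoeff_apply, map_pow, hg, zero_pow (by omega), mul_zero]
    exact dvd_zero a
  · exact dvd_mul_of_dvd_left (h m (by omega)) _

lemma dvd_coeff_of_dvd_coeff_psComp {a : R} {f g : R⟦X⟧} (hf : IsUnit (coeff 1 f))
    (hg : constantCoeff g = 0) {n : ℕ} (h : ∀ j, j ≠ 0 → j < n → a ∣ coeff j (psComp f g)) :
    ∀ j < n, a ∣ coeff j g := by
  intro j
  induction j using Nat.strong_induction_on with
  | _ j ih =>
    intro hjn
    rcases eq_or_ne j 0 with rfl | hj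
    · rw [coeff_zero_eq_constantCoeff_apply, hg]
      exact dvd_zero a
    have hrest : a ∣ ∑ k ∈ Finset.Ico 2 (j + 1), coeff k f * coeff j (g ^ k) :=
      Finset.dvd_sum fun k hk => dvd_mul_of_dvd_right
        (dvd_coeff_pow_of_dvd_coeff_lt hg (fun i hi => ih i hi (by omega))
          (Finset.mem_Ico.mp hk).1) _
    have hmain := h j hj hjn
    rw [coeff_psComp_of_ne_zero f g hj, ← dvd_sub_left hrest, add_sub_cancel_right] at hmain
    exact hf.dvd_mul_left.mp hmain

lemma dvd_coeff_pow_prime {p : ℕ} (hp : p.Prime) {F : R⟦X⟧} (hF : constantCoeff F = 1)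
    {j : ℕ} (hj : j ≠ 0) (hjp : j < p) : (p : R) ∣ coeff j (F ^ p) := by
  obtain ⟨G, hG⟩ : X ∣ F - 1 := X_dvd_iff.mpr (by rw [map_sub, hF, map_one, sub_self])
  obtain ⟨r, hr⟩ := exists_add_pow_prime_eq hp 1 (X * G)
  rw [show F = 1 + X * G by rw [← hG]; ring, hr, one_pow, mul_pow, ← map_natCast C p,
    mul_assoc, mul_assoc, map_add, map_add, coeff_one, if_neg hj, coeff_X_pow_mul',
    if_neg (by omega), coeff_C_mul]
  simp

lemma exists_eq_X_pow_mul_add_C_mul {a : R} {f : R⟦X⟧} {n : ℕ} (h : ∀ i < n, a ∣ coeff i f) :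
    ∃ u v : R⟦X⟧, f = X ^ n * u + C a * v := by
  obtain ⟨q, hq⟩ := (Polynomial.C_dvd_iff_dvd_coeff a (trunc n f)).mpr fun i => by
    rw [coeff_trunc]
    split_ifs with hi
    exacts [h i hi, dvd_zero a]
  refine ⟨mk fun i => coeff (i + n) f, q, ?_⟩
  rw [← Polynomial.coe_C, ← Polynomial.coe_mul, ← hq]
  exact eq_X_pow_mul_shift_add_trunc n f

end

/-- If `Y` has zero constant term and `E(Y) = E(X)^p`, then
`Y ∈ X^p·ℤ_p[[X]] + p·X·ℤ_p[[X]]`; equivalently every coefficient of `X^j` in `Y`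
with `1 ≤ j < p` is divisible by `p`. -/
theorem artinHasse_pow_p_subst (p : ℕ) [Fact p.Prime]
    (E : PowerSeries ℤ_[p]) (hE : IsArtinHasse p E)
    (Y : PowerSeries ℤ_[p]) (hY0 : PowerSeries.constantCoeff (R := ℤ_[p]) Y = 0)
    (hY : psComp E Y = E ^ p) :
    (∃ u v : PowerSeries ℤ_[p],
        Y = PowerSeries.X ^ p * u + (p : PowerSeries ℤ_[p]) * (PowerSeries.X * v)) ∧
      ∀ j : ℕ, 1 ≤ j → j < p → (p : ℤ_[p]) ∣ PowerSeries.coeff (R := ℤ_[p]) j Y := by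
  have hp : p.Prime := Fact.out
  have hdvd : ∀ j < p, (p : ℤ_[p]) ∣ coeff j Y :=
    dvd_coeff_of_dvd_coeff_psComp (hE.coeff_one ▸ isUnit_one) hY0 fun j hj hjp =>
      hY ▸ dvd_coeff_pow_prime hp hE.1 hj hjp
  refine ⟨?_, fun j _ hjp => hdvd j hjp⟩
  obtain ⟨Z, rfl⟩ := X_dvd_iff.mpr hY0
  obtain ⟨u, v, hZ⟩ := exists_eq_X_pow_mul_add_C_mul (n := p - 1) fun i hi => by
    simpa only [coeff_succ_X_mul] using hdvd (i + 1) (by omega)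
  refine ⟨u, v, ?_⟩
  have hX : X * X ^ (p - 1) = (X : ℤ_[p]⟦X⟧) ^ p := by
    rw [← pow_succ', Nat.sub_add_cancel hp.one_le]
  rw [hZ, ← map_natCast C p, ← hX]
  ring

end
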